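/- For a fundamental discriminant D, prime p, and k ≥ 1, define T_{p^k}^{(D)}(s) = τ_s(p^k) − (χ_D(p)/√p) τ_s(p^{k−1}) with τ_s(p^j) = (Z^j − Z^{−j})/(Z − Z^{−1}) where Z = p^{1/2 − s}. Then every zero s of T_{p^k}^{(D)}(s) satisfies Re(s) = 1/2. -/

import Mathlib

/-- The Kronecker symbol `(a/n)`. -/
def kron (a : ℤ) (n : ℕ) : ℤ :=
  (if a % 2 = 0 then 0 else if a % 8 = 1 ∨ a % 8 = 7 then 1 else -1) ^ (n.factorization 2) *
    jacobiSym a (n / 2 ^ (n.factorization 2))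

/-- `D` is a fundamental discriminant. -/
def IsFundamentalDiscriminant (D : ℤ) : Prop :=
  (D % 4 = 1 ∧ Squarefree D) ∨
    (∃ m : ℤ, D = 4 * m ∧ Squarefree m ∧ (m % 4 = 2 ∨ m % 4 = 3))

/-- `τ_s(p^j) = (Z^j - Z^{-j})/(Z - Z^{-1})` with `Z = p^{1/2 - s}`. -/
noncomputable def tauZ (p : ℕ) (s : ℂ) (j : ℕ) : ℂ :=
  (((p : ℂ) ^ ((1 / 2 : ℂ) - s)) ^ j - ((p : ℂ) ^ ((1 / 2 : ℂ) - s))⁻¹ ^ j) /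
    ((p : ℂ) ^ ((1 / 2 : ℂ) - s) - ((p : ℂ) ^ ((1 / 2 : ℂ) - s))⁻¹)

/-- `T_{p^k}^{(D)}(s) = τ_s(p^k) - (χ_D(p)/√p) τ_s(p^{k-1})`. -/
noncomputable def TpkD (D : ℤ) (p : ℕ) (k : ℕ) (s : ℂ) : ℂ :=
  tauZ p s k - ((kron D p : ℂ) / (Real.sqrt p : ℂ)) * tauZ p s (k - 1)

lemma kron_abs_le_one (a : ℤ) (n : ℕ) : |kron a n| ≤ 1 := by
  unfold kron
  rw [abs_mul, abs_pow]
  have h1 : |(if a % 2 = 0 then (0:ℤ) else if a % 8 = 1 ∨ a % 8 = 7 then 1 else -1)| ≤ 1 := by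
    split_ifs <;> simp
  have h2 : |jacobiSym a (n / 2 ^ (n.factorization 2))| ≤ 1 := by
    rcases jacobiSym.trichotomy a (n / 2 ^ (n.factorization 2)) with h | h | h <;> rw [h] <;> simp
  calc |(if a % 2 = 0 then (0:ℤ) else if a % 8 = 1 ∨ a % 8 = 7 then 1 else -1)| ^
        (n.factorization 2) * |jacobiSym a (n / 2 ^ (n.factorization 2))|
      ≤ 1 ^ (n.factorization 2) * 1 :=
        mul_le_mul (pow_le_pow_left₀ (abs_nonneg _) h1 _) h2 (abs_nonneg _) (by positivity)
    _ = 1 := by simp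

lemma abs_sq_diff (er : ℝ) (Z : ℂ) :
    ‖1 - (er:ℂ)*Z‖ ^ 2 - ‖Z - (er:ℂ)‖ ^ 2
      = (1 - er^2) * (1 - ‖Z‖ ^ 2) := by
  rw [Complex.sq_norm, Complex.sq_norm, Complex.sq_norm]
  simp [Complex.normSq_apply, Complex.sub_re, Complex.sub_im, Complex.mul_re, Complex.mul_im]
  ring

lemma abs_eq_one_of_poly (Z : ℂ) (er : ℝ) (n : ℕ) (hn : 1 ≤ n) (he : |er| < 1)
    (h : Z ^ n * (Z - (er:ℂ)) = 1 - (er:ℂ) * Z) : ‖Z‖ = 1 := by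
  set r := ‖Z‖ with hr
  set A := ‖Z - (er:ℂ)‖ with hA
  set B := ‖1 - (er:ℂ)*Z‖ with hB
  have hAB : r ^ n * A = B := by rw [hr, hA, hB, ← norm_pow, ← norm_mul, h]
  have hid : B ^ 2 - A ^ 2 = (1 - er^2) * (1 - r ^ 2) := abs_sq_diff er Z
  have her2 : er ^ 2 < 1 := by
    have := abs_lt.mp he; nlinarith
  have hA0 : 0 ≤ A := norm_nonneg _
  have hB0 : 0 ≤ B := norm_nonneg _
  have hr0 : 0 ≤ r := norm_nonneg _
  rcases lt_trichotomy r 1 with hlt | heq | hgt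
  · exfalso
    have hpow : r ^ n ≤ 1 := pow_le_one₀ hr0 hlt.le
    have hBA : B ≤ A := by
      rw [← hAB]
      exact mul_le_of_le_one_left hA0 hpow
    nlinarith [mul_nonneg (sub_nonneg.mpr hBA) (add_nonneg hA0 hB0),
      mul_pos (show (0:ℝ) < 1 - er^2 by nlinarith) (show (0:ℝ) < 1 - r^2 by nlinarith)]
  · exact heq
  · exfalso
    have hZne : Z ≠ (er:ℂ) := by
      intro hEq
      rw [hr, hEq, Complex.norm_real, Real.norm_eq_abs] at hgt
      linarith
    have hApos : 0 < A := by
      rw [hA]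
      exact norm_pos_iff.mpr (sub_ne_zero.mpr hZne)
    have hpow : r ≤ r ^ n := le_self_pow₀ hgt.le (by omega)
    have hBA : A < B := by
      rw [← hAB]
      nlinarith
    nlinarith [mul_pos (sub_pos.mpr hBA) (show (0:ℝ) < B + A by linarith),
      mul_pos (show (0:ℝ) < 1 - er^2 by nlinarith) (show (0:ℝ) < r^2 - 1 by nlinarith)]

theorem TpkD_zeros_on_critical_line (D : ℤ) (hD : IsFundamentalDiscriminant D)
    (p : ℕ) (hp : p.Prime) (k : ℕ) (hk : 1 ≤ k) (s : ℂ)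
    (hzero : TpkD D p k s = 0) : s.re = 1 / 2 := by
  obtain ⟨m, rfl⟩ : ∃ m, k = m + 1 := ⟨k - 1, by omega⟩
  set Z : ℂ := (p : ℂ) ^ ((1 / 2 : ℂ) - s) with hZdef
  have hp0 : (0:ℝ) < p := by exact_mod_cast hp.pos
  have hp1 : (1:ℝ) < p := by exact_mod_cast hp.one_lt
  have habsZ : ‖Z‖ = (p:ℝ) ^ ((1/2 : ℝ) - s.re) := by
    rw [hZdef, show ((p:ℂ)) = ((p:ℝ):ℂ) by push_cast; ring,
      Complex.norm_cpow_eq_rpow_re_of_pos hp0]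
    norm_num
  have hZ0 : Z ≠ 0 := by
    intro h
    rw [h, norm_zero] at habsZ
    exact absurd habsZ.symm (ne_of_gt (Real.rpow_pos_of_pos hp0 _))
  -- the real "epsilon"
  set er : ℝ := (kron D p : ℝ) / Real.sqrt p with herdef
  have hsqrt1 : (1:ℝ) < Real.sqrt p := by
    rw [show (1:ℝ) = Real.sqrt 1 by simp]
    exact Real.sqrt_lt_sqrt (by norm_num) hp1
  have her : |er| < 1 := by
    rw [herdef, abs_div, abs_of_pos (by linarith : (0:ℝ) < Real.sqrt p)]
    rw [div_lt_one (by linarith)]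
    calc |(kron D p : ℝ)| ≤ 1 := by
          have := kron_abs_le_one D p
          exact_mod_cast this
      _ < Real.sqrt p := hsqrt1
  have hercast : ((kron D p : ℂ) / (Real.sqrt p : ℂ)) = ((er:ℝ) : ℂ) := by
    rw [herdef]; push_cast; ring
  -- main: Complex.abs Z = 1
  have habs1 : ‖Z‖ = 1 := by
    rcases eq_or_ne (Z - Z⁻¹) 0 with hd | hd
    · have hZZ : Z * Z = 1 := by
        have h2 := sub_eq_zero.mp hd
        nth_rewrite 2 [h2]
        exact mul_inv_cancel₀ hZ0
      have := congrArg (‖·‖) hZZ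
      rw [norm_mul, norm_one] at this
      nlinarith [norm_nonneg Z]
    · unfold TpkD tauZ at hzero
      rw [hercast] at hzero
      simp only [← hZdef, Nat.add_sub_cancel] at hzero
      rw [← mul_div_assoc, div_sub_div_same, div_eq_zero_iff] at hzero
      have hE := hzero.resolve_right hd
      field_simp at hE
      have hE2 : Z ^ m * (Z^(2*m+2) - 1 - (er:ℂ)*(Z^(2*m+1) - Z)) = 0 := by
        linear_combination (norm := skip) Z ^ (2*m+1) * hE
        simp only [one_div, inv_pow]
        field_simp
        ring
      have hG := (mul_eq_zero.mp hE2).resolve_left (pow_ne_zero m hZ0)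
      exact abs_eq_one_of_poly Z er (2*m+1) (by omega)
        her (by linear_combination hG)
  -- conclude
  rw [habsZ] at habs1
  have hlog := congrArg Real.log habs1
  rw [Real.log_rpow hp0, Real.log_one] at hlog
  have hlp : Real.log p ≠ 0 := ne_of_gt (Real.log_pos hp1)
  rcases mul_eq_zero.mp hlog with h' | h'
  · linarith
  · exact absurd h' hlp
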